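/- (Laplace Mechanism, Theorem 2.) Let ε > 0, Δ > 0, d ≥ 1, and q, q' ∈ ℝ^d with ‖q − q'‖₁ ≤ Δ. Set λ = Δ/ε, and let μ_q and μ_{q'} be the d-dimensional i.i.d. Laplace measures with scale λ centered at q and q', respectively. Then for every measurable set S ⊆ ℝ^d, μ_q(S) ≤ exp(ε) · μ_{q'}(S). -/

import Mathlib

open MeasureTheory

/-- The `d`-dimensional i.i.d. Laplace measure with center `q` and scale `lam`. -/
noncomputable def laplaceMeasure (d : ℕ) (lam : ℝ) (q : Fin d → ℝ) :
    Measure (Fin d → ℝ) :=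
  volume.withDensity fun x =>
    ENNReal.ofReal (∏ i : Fin d, (1 / (2 * lam)) * Real.exp (-|x i - q i| / lam))

/-!
Moving the center of a one-dimensional Laplace density from `b` to `a` changes it by at most the
factor `exp (|a - b| / λ)`, by the triangle inequality `|x - b| ≤ |x - a| + |a - b|`. Multiplying
over coordinates, the density ratio of the two product measures is at most `exp (‖q - q'‖₁ / λ)`,
which is `≤ exp ε` for `λ = Δ / ε`; a pointwise bound on densities bounds the measures setwise.
-/

open Real

lemma laplace_density_le_exp_mul {lam : ℝ} (hlam : 0 ≤ lam) (x a b : ℝ) :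
    1 / (2 * lam) * exp (-|x - a| / lam)
      ≤ exp (|a - b| / lam) * (1 / (2 * lam) * exp (-|x - b| / lam)) := by
  have htri : -|x - a| ≤ |a - b| + -|x - b| := by
    have := abs_sub_le x a b
    linarith
  rw [mul_left_comm, ← exp_add, ← add_div]
  gcongr

lemma laplace_prod_density_le_exp_mul {d : ℕ} {lam : ℝ} (hlam : 0 ≤ lam) (x q q' : Fin d → ℝ) :
    ∏ i, 1 / (2 * lam) * exp (-|x i - q i| / lam)
      ≤ exp ((∑ i, |q i - q' i|) / lam) * ∏ i, 1 / (2 * lam) * exp (-|x i - q' i| / lam) := by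
  rw [Finset.sum_div, exp_sum, ← Finset.prod_mul_distrib]
  exact Finset.prod_le_prod (fun i _ => by positivity)
    fun i _ => laplace_density_le_exp_mul hlam (x i) (q i) (q' i)

lemma withDensity_le_smul_withDensity {α : Type*} [MeasurableSpace α] {μ : Measure α}
    {f g : α → ENNReal} {c : ENNReal} (hc : c ≠ ⊤) (hfg : ∀ x, f x ≤ c * g x) :
    μ.withDensity f ≤ c • μ.withDensity g := by
  rw [← withDensity_smul' c g hc]
  exact withDensity_mono (Filter.Eventually.of_forall hfg)

lemma laplaceMeasure_le_smul {d : ℕ} {lam : ℝ} (hlam : 0 ≤ lam) (q q' : Fin d → ℝ) :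
    laplaceMeasure d lam q
      ≤ ENNReal.ofReal (exp ((∑ i, |q i - q' i|) / lam)) • laplaceMeasure d lam q' :=
  withDensity_le_smul_withDensity ENNReal.ofReal_ne_top fun x => by
    rw [← ENNReal.ofReal_mul (exp_nonneg _)]
    exact ENNReal.ofReal_le_ofReal (laplace_prod_density_le_exp_mul hlam x q q')

theorem laplace_mechanism_dp_general
    (ε Δ : ℝ) (hε : 0 < ε)
    (d : ℕ) (q q' : Fin d → ℝ)
    (hq : (∑ i : Fin d, |q i - q' i|) ≤ Δ)
    (S : Set (Fin d → ℝ)) :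
    laplaceMeasure d (Δ / ε) q S
      ≤ ENNReal.ofReal (Real.exp ε) * laplaceMeasure d (Δ / ε) q' S := by
  have hΔ : 0 ≤ Δ := (Finset.sum_nonneg fun i _ => abs_nonneg _).trans hq
  have hlam : 0 ≤ Δ / ε := div_nonneg hΔ hε.le
  have hratio : (∑ i, |q i - q' i|) / (Δ / ε) ≤ ε :=
    div_le_of_le_mul₀ hlam hε.le (by rwa [mul_div_cancel₀ Δ hε.ne'])
  calc laplaceMeasure d (Δ / ε) q S
      ≤ ENNReal.ofReal (exp ((∑ i, |q i - q' i|) / (Δ / ε))) * laplaceMeasure d (Δ / ε) q' S :=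
        laplaceMeasure_le_smul hlam q q' S
    _ ≤ ENNReal.ofReal (exp ε) * laplaceMeasure d (Δ / ε) q' S := by gcongr

/-- Laplace Mechanism (Theorem 2): with scale `Δ/ε`, the output distributions
on two query answers at ℓ1-distance at most `Δ` differ by at most `exp ε`. -/
theorem laplace_mechanism_dp
    (ε Δ : ℝ) (hε : 0 < ε) (hΔ : 0 < Δ)
    (d : ℕ) (hd : 1 ≤ d) (q q' : Fin d → ℝ)
    (hq : (∑ i : Fin d, |q i - q' i|) ≤ Δ)
    (S : Set (Fin d → ℝ)) (hS : MeasurableSet S) :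
    laplaceMeasure d (Δ / ε) q S
      ≤ ENNReal.ofReal (Real.exp ε) * laplaceMeasure d (Δ / ε) q' S :=
  laplace_mechanism_dp_general ε Δ hε d q q' hq S
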